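/- Let A and B be positive (self-adjoint, nonnegative) bounded linear operators on a complex Hilbert space H. Then ‖A^{1/2} B^{1/2}‖ ≤ ‖A B‖^{1/2}, where A^{1/2} denotes the positive square root of A and ‖·‖ is the operator norm. -/

import Mathlib

/-!
Write `a = A^{1/2}` and `b = B^{1/2}`. By the C⋆-identity, `‖a b‖² = ‖(a b)⋆ (a b)‖ = ‖b A b‖`.
The operator `b A b` is self-adjoint, so its norm is its spectral radius, and `b (A b)` has the
same spectral radius as `(A b) b = A B`; the spectral radius is at most the norm.
-/

open scoped ENNReal

namespace spectrum

theorem spectralRadius_mul_comm {𝕜 A : Type*} [NormedField 𝕜] [Ring A] [Algebra 𝕜 A]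
    (a b : A) : spectralRadius 𝕜 (a * b) = spectralRadius 𝕜 (b * a) := by
  suffices h : ∀ x y : A, spectralRadius 𝕜 (x * y) ≤ spectralRadius 𝕜 (y * x) from
    le_antisymm (h a b) (h b a)
  intro x y
  refine iSup₂_le fun k hk => ?_
  rcases eq_or_ne k 0 with rfl | hk0
  · simp
  · have hk' : k ∈ spectrum 𝕜 (y * x) \ {0} := nonzero_mul_comm (𝕜 := 𝕜) x y ▸ ⟨hk, hk0⟩
    exact le_iSup₂_of_le k hk'.1 le_rfl

end spectrum

namespace CFC

variable {A : Type*} [CStarAlgebra A] [PartialOrder A] [StarOrderedRing A] {a b : A}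

theorem star_sqrt_mul_sqrt_mul_self (ha : 0 ≤ a) (b : A) :
    star (sqrt a * sqrt b) * (sqrt a * sqrt b) = sqrt b * a * sqrt b := by
  rw [star_mul, (sqrt_nonneg a).isSelfAdjoint.star_eq, (sqrt_nonneg b).isSelfAdjoint.star_eq]
  calc sqrt b * sqrt a * (sqrt a * sqrt b) = sqrt b * (sqrt a * sqrt a) * sqrt b := by noncomm_ring
    _ = sqrt b * a * sqrt b := by rw [sqrt_mul_sqrt_self a ha]

theorem nnnorm_sqrt_mul_mul_sqrt_le (ha : 0 ≤ a) (hb : 0 ≤ b) :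
    ‖sqrt b * a * sqrt b‖₊ ≤ ‖a * b‖₊ := by
  nontriviality A
  have hsa : IsSelfAdjoint (sqrt b * a * sqrt b) :=
    ha.isSelfAdjoint.conjugate_self (sqrt_nonneg b).isSelfAdjoint
  suffices h : (‖sqrt b * a * sqrt b‖₊ : ℝ≥0∞) ≤ ‖a * b‖₊ from ENNReal.coe_le_coe.mp h
  calc (‖sqrt b * a * sqrt b‖₊ : ℝ≥0∞) = spectralRadius ℂ (sqrt b * (a * sqrt b)) := by
        rw [← hsa.spectralRadius_eq_nnnorm, mul_assoc]
    _ = spectralRadius ℂ (a * sqrt b * sqrt b) := spectrum.spectralRadius_mul_comm _ _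
    _ = spectralRadius ℂ (a * b) := by rw [mul_assoc, sqrt_mul_sqrt_self b hb]
    _ ≤ ‖a * b‖₊ := spectrum.spectralRadius_le_nnnorm _

theorem norm_sqrt_mul_sqrt_sq_le (ha : 0 ≤ a) (hb : 0 ≤ b) :
    ‖sqrt a * sqrt b‖ ^ 2 ≤ ‖a * b‖ := by
  rw [sq, ← CStarRing.norm_star_mul_self, star_sqrt_mul_sqrt_mul_self ha]
  exact_mod_cast nnnorm_sqrt_mul_mul_sqrt_le ha hb

end CFC

set_option synthInstance.maxHeartbeats 1000000
theorem sqrt_mul_sqrt_norm_le {H : Type*} [NormedAddCommGroup H] [InnerProductSpace ℂ H]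
    [CompleteSpace H] (A B : H →L[ℂ] H) (hA : A.IsPositive) (hB : B.IsPositive) :
    ‖CFC.sqrt A * CFC.sqrt B‖ ≤ Real.sqrt ‖A * B‖ :=
  Real.le_sqrt_of_sq_le <|
    CFC.norm_sqrt_mul_sqrt_sq_le (A.nonneg_iff_isPositive.mpr hA) (B.nonneg_iff_isPositive.mpr hB)
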